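/- arXiv:2509.00668 — 5 statements merged into one kernel-verified Lean document; each statement's English description precedes it below -/
import Mathlib

section
/- Let N be a positive integer, let A be a symmetric real N×N matrix, and let Δt > 0 be such that the matrix I + Δt·A is positive definite. Let u ∈ ℝ^N with ‖u‖ = 1, let ũ = (I + Δt·A)⁻¹ u, and let w = ũ/‖ũ‖ (note ũ ≠ 0 since I + Δt·A is invertible). Then ⟨w, A w⟩ ≤ ⟨u, A u⟩; that is, one step of the semi-implicit backward-Euler normalized gradient flow for the quadratic energy E(v) = ⟨v, A v⟩ does not increase the energy, for any time step Δt > 0. -/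
/-!
With `B = 1 + Δt • A` and `B ũ = u`, the Rayleigh quotients satisfy `R_B = 1 + Δt R_A`, so the
claim is `R_B ũ ≤ R_B (B ũ)`. For positive semidefinite `B` the Rayleigh quotient can only grow
under `x ↦ B x`: Cauchy–Schwarz for the standard form gives `⟨x, Bx⟩² ≤ |x|² |Bx|²`, and for the
form of `B` gives `|Bx|⁴ = ⟨x, B(Bx)⟩² ≤ ⟨x, Bx⟩ ⟨Bx, B(Bx)⟩`; multiplying and cancelling yields
`⟨x, Bx⟩ |Bx|² ≤ |x|² ⟨Bx, B(Bx)⟩`.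
-/

open Matrix

variable {n : Type*} [Fintype n]

noncomputable def rayleighQuotient (M : Matrix n n ℝ) (x : n → ℝ) : ℝ := (x ⬝ᵥ M *ᵥ x) / (x ⬝ᵥ x)

theorem Matrix.IsSymm.dotProduct_mulVec_comm {M : Matrix n n ℝ} (hM : M.IsSymm) (x y : n → ℝ) :
    x ⬝ᵥ M *ᵥ y = y ⬝ᵥ M *ᵥ x := by
  rw [dotProduct_mulVec, ← mulVec_transpose, hM.eq, dotProduct_comm]

theorem Matrix.PosSemidef.dotProduct_mulVec_sq_le {M : Matrix n n ℝ} (hM : M.PosSemidef)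
    (x y : n → ℝ) : (x ⬝ᵥ M *ᵥ y) ^ 2 ≤ (x ⬝ᵥ M *ᵥ x) * (y ⬝ᵥ M *ᵥ y) := by
  classical
  have hsymm : LinearMap.IsSymm M.toBilin' := LinearMap.BilinForm.isSymm_iff.mp <|
    isSymm_toBilin'_iff_isSymm.mpr (isHermitian_iff_isSymm.mp hM.isHermitian)
  have hnonneg (z : n → ℝ) : 0 ≤ M.toBilin' z z := by
    simpa only [toBilin'_apply', star_trivial] using hM.dotProduct_mulVec_nonneg z
  simpa only [toBilin'_apply'] using M.toBilin'.apply_sq_le_of_symm hnonneg hsymm x y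

theorem Matrix.PosSemidef.rayleighQuotient_le_rayleighQuotient_mulVec {M : Matrix n n ℝ}
    (hM : M.PosSemidef) {x : n → ℝ} (hx : M *ᵥ x ≠ 0) :
    rayleighQuotient M x ≤ rayleighQuotient M (M *ᵥ x) := by
  have hx0 : 0 < x ⬝ᵥ x := dotProduct_star_self_pos_iff.mpr (by rintro rfl; simp at hx)
  have hMx0 : 0 < M *ᵥ x ⬝ᵥ M *ᵥ x := dotProduct_star_self_pos_iff.mpr hx
  set a := x ⬝ᵥ M *ᵥ x
  set b := M *ᵥ x ⬝ᵥ M *ᵥ x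
  set c := M *ᵥ x ⬝ᵥ M *ᵥ (M *ᵥ x)
  have hcs₁ : a ^ 2 ≤ (x ⬝ᵥ x) * b := by
    classical
    simpa [a, b] using PosSemidef.one.dotProduct_mulVec_sq_le x (M *ᵥ x)
  have hcs₂ : b ^ 2 ≤ a * c := by
    have h := hM.dotProduct_mulVec_sq_le x (M *ᵥ x)
    rwa [(isHermitian_iff_isSymm.mp hM.isHermitian).dotProduct_mulVec_comm x] at h
  have ha : 0 < a := by
    have hc : 0 ≤ c := by simpa only [star_trivial] using hM.dotProduct_mulVec_nonneg (M *ᵥ x)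
    have hac : 0 < a * c := hcs₂.trans_lt' (by positivity)
    exact pos_of_mul_pos_left hac hc
  have hab : 0 < a * b := mul_pos ha hMx0
  rw [rayleighQuotient, rayleighQuotient, div_le_div_iff₀ hx0 hMx0]
  refine le_of_mul_le_mul_left ?_ hab
  calc a * b * (a * b) = a ^ 2 * b ^ 2 := by ring
    _ ≤ (x ⬝ᵥ x) * b * (a * c) := by gcongr
    _ = a * b * (c * (x ⬝ᵥ x)) := by ring

theorem rayleighQuotient_one_add_smul [DecidableEq n] (A : Matrix n n ℝ) (c : ℝ) {x : n → ℝ}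
    (hx : x ≠ 0) : rayleighQuotient (1 + c • A) x = 1 + c * rayleighQuotient A x := by
  have hx0 : x ⬝ᵥ x ≠ 0 := dotProduct_self_eq_zero.not.mpr hx
  simp only [rayleighQuotient, add_mulVec, one_mulVec, smul_mulVec, dotProduct_add,
    dotProduct_smul, smul_eq_mul]
  field_simp

theorem dotProduct_mulVec_inv_sqrt_smul (A : Matrix n n ℝ) (x : n → ℝ) :
    ((√(x ⬝ᵥ x))⁻¹ • x) ⬝ᵥ A *ᵥ ((√(x ⬝ᵥ x))⁻¹ • x) = rayleighQuotient A x := by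
  have hx0 : 0 ≤ x ⬝ᵥ x := by simpa only [star_trivial] using dotProduct_star_self_nonneg x
  simp only [rayleighQuotient, mulVec_smul, dotProduct_smul, smul_dotProduct, smul_eq_mul]
  rw [← mul_assoc, ← mul_inv, ← sq, Real.sq_sqrt hx0, inv_mul_eq_div]

theorem befd_energy_diminishing_linear_general
    (N : ℕ)
    (A : Matrix (Fin N) (Fin N) ℝ)
    (Δt : ℝ) (hΔt : 0 < Δt)
    (hpd : (1 + Δt • A).PosDef)
    (u : Fin N → ℝ) (hu : u ⬝ᵥ u = 1)
    (utilde : Fin N → ℝ) (hutilde : utilde = (1 + Δt • A)⁻¹ *ᵥ u)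
    (w : Fin N → ℝ) (hw : w = (Real.sqrt (utilde ⬝ᵥ utilde))⁻¹ • utilde) :
    w ⬝ᵥ (A *ᵥ w) ≤ u ⬝ᵥ (A *ᵥ u) := by
  have hu0 : u ≠ 0 := by rintro rfl; simp at hu
  have hBu : (1 + Δt • A) *ᵥ utilde = u := by
    have hdet : IsUnit (1 + Δt • A).det := (isUnit_iff_isUnit_det _).mp hpd.isUnit
    rw [hutilde, mulVec_mulVec, mul_nonsing_inv _ hdet, one_mulVec]
  have hutilde0 : utilde ≠ 0 := by rintro rfl; simp [← hBu] at hu0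
  have key := hpd.posSemidef.rayleighQuotient_le_rayleighQuotient_mulVec (hBu ▸ hu0)
  rw [hBu, rayleighQuotient_one_add_smul A Δt hutilde0, rayleighQuotient_one_add_smul A Δt hu0,
    add_le_add_iff_left, mul_le_mul_iff_right₀ hΔt] at key
  rw [hw, dotProduct_mulVec_inv_sqrt_smul]
  simpa only [rayleighQuotient, hu, div_one] using key

/-- One step of the semi-implicit backward-Euler normalized gradient flow for the
quadratic energy `E(v) = ⟨v, A v⟩` does not increase the energy, for any `Δt > 0`. -/
theorem befd_energy_diminishing_linear
    (N : ℕ) (hN : 0 < N)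
    (A : Matrix (Fin N) (Fin N) ℝ) (hA : A.IsSymm)
    (Δt : ℝ) (hΔt : 0 < Δt)
    (hpd : (1 + Δt • A).PosDef)
    (u : Fin N → ℝ) (hu : u ⬝ᵥ u = 1)
    (utilde : Fin N → ℝ) (hutilde : utilde = (1 + Δt • A)⁻¹ *ᵥ u)
    (w : Fin N → ℝ) (hw : w = (Real.sqrt (utilde ⬝ᵥ utilde))⁻¹ • utilde) :
    w ⬝ᵥ (A *ᵥ w) ≤ u ⬝ᵥ (A *ᵥ u) :=
  befd_energy_diminishing_linear_general N A Δt hΔt hpd u hu utilde hutilde w hw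
end

section
/- There is an absolute constant C > 0 with the following property. Let h > 0, let (x₀, y₀) ∈ ℝ², let C_h = [x₀, x₀+h] × [y₀, y₀+h], and let f : ℝ² → ℝ be four times continuously differentiable on a neighborhood of C_h, with M₄ an upper bound for the absolute values of all partial derivatives of f of order at most 4 on C_h. Let T(f) = (h²/4)·(f(x₀,y₀) + f(x₀+h,y₀) + f(x₀,y₀+h) + f(x₀+h,y₀+h)) be the two-dimensional trapezoidal rule on C_h, and let c = (x₀+h/2, y₀+h/2) be the center of C_h. Then |∫_{C_h} f − T(f) + (h⁴/12)·Δf(c)| ≤ C·M₄·h⁶, where Δf = ∂²f/∂x² + ∂²f/∂y². -/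
open MeasureTheory Set

/-- Partial derivative in the first variable. -/
noncomputable def pdx (f : ℝ × ℝ → ℝ) (p : ℝ × ℝ) : ℝ :=
  deriv (fun x => f (x, p.2)) p.1

/-- Partial derivative in the second variable. -/
noncomputable def pdy (f : ℝ × ℝ → ℝ) (p : ℝ × ℝ) : ℝ :=
  deriv (fun y => f (p.1, y)) p.2

/-- The Laplacian `Δf = ∂²f/∂x² + ∂²f/∂y²`. -/
noncomputable def lap2 (f : ℝ × ℝ → ℝ) (p : ℝ × ℝ) : ℝ :=
  pdx (pdx f) p + pdy (pdy f) p

/-!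
In one variable, Taylor expansion at `a` to fourth order gives the corrected trapezoidal rule
`∫ₐ^{a+h} φ = h/2 (φ(a) + φ(a+h)) - h³/12 φ''(a + h/2) + O(h⁵)`. By Fubini, apply it in `y` on
every vertical segment of the cell and then in `x` on the two horizontal edges. This yields the
corner rule up to two correction terms: `h³/12 ∫ ∂²f/∂y²(x, y₀ + h/2) dx`, which the midpoint rule
replaces by `h⁴/12 ∂²f/∂y²(c)`, and `h⁴/24` times the values of `∂²f/∂x²` at the midpoints of the
two horizontal edges, whose average is `∂²f/∂x²(c) + O(h²)`. Every remainder is `O(M₄ h⁶)`.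
-/

open scoped Nat
open Finset

theorem integral_sub_pow (a h : ℝ) (k : ℕ) :
    ∫ t in a..a + h, (t - a) ^ k = h ^ (k + 1) / (k + 1) := by
  simp [intervalIntegral.integral_comp_sub_right (fun t => t ^ k), integral_pow]

theorem integral_taylor_sum (a h : ℝ) (c : ℕ → ℝ) (n : ℕ) :
    ∫ t in a..a + h, ∑ k ∈ range n, (t - a) ^ k / k ! * c k
      = ∑ k ∈ range n, h ^ (k + 1) / (k + 1)! * c k := by
  rw [intervalIntegral.integral_finsetSum fun k _ => by
    apply Continuous.intervalIntegrable; fun_prop]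
  refine sum_congr rfl fun k _ => ?_
  rw [intervalIntegral.integral_mul_const, intervalIntegral.integral_div, integral_sub_pow,
    Nat.factorial_succ]
  push_cast
  field_simp

def IsDerivChainOn (g : ℕ → ℝ → ℝ) (n : ℕ) (s : Set ℝ) : Prop :=
  (∀ k < n, ∀ t ∈ s, HasDerivWithinAt (g k) (g (k + 1) t) s t) ∧ ContinuousOn (g n) s

namespace IsDerivChainOn

variable {g : ℕ → ℝ → ℝ} {n : ℕ} {s : Set ℝ}

theorem shift {m : ℕ} (hg : IsDerivChainOn g (n + m) s) :
    IsDerivChainOn (fun k => g (m + k)) n s :=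
  ⟨fun k hk => hg.1 (m + k) (by omega), by simpa [add_comm] using hg.2⟩

theorem contDiffOn (hg : IsDerivChainOn g n s) (hs : UniqueDiffOn ℝ s) :
    ContDiffOn ℝ n (g 0) s := by
  induction n generalizing g with
  | zero => exact contDiffOn_zero.mpr hg.2
  | succ n ih =>
    have hder := fun t ht => hg.1 0 n.succ_pos t ht
    rw [Nat.cast_succ, contDiffOn_succ_iff_derivWithin hs]
    refine ⟨fun t ht => (hder t ht).differentiableWithinAt, by simp, ?_⟩
    exact (ih (hg.shift (m := 1))).congr fun t ht => (hder t ht).derivWithin (hs t ht)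

theorem iteratedDerivWithin_eq (hg : IsDerivChainOn g n s) (hs : UniqueDiffOn ℝ s) {k : ℕ}
    (hk : k ≤ n) : EqOn (iteratedDerivWithin k (g 0) s) (g k) s := by
  induction k with
  | zero => intro t _; simp
  | succ k ih =>
    intro t ht
    rw [iteratedDerivWithin_succ, derivWithin_congr (ih (by omega)) (ih (by omega) ht)]
    exact (hg.1 k (by omega) t ht).derivWithin (hs t ht)

theorem continuousOn (hg : IsDerivChainOn g n s) : ContinuousOn (g 0) s := by
  cases n with
  | zero => exact hg.2
  | succ n => exact fun t ht => (hg.1 0 n.succ_pos t ht).continuousWithinAt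

theorem abs_sub_taylor_le {a b M x : ℝ} (hg : IsDerivChainOn g (n + 1) (Icc a b)) (hab : a < b)
    (hM : ∀ t ∈ Icc a b, |g (n + 1) t| ≤ M) (hx : x ∈ Icc a b) :
    |g 0 x - ∑ k ∈ range (n + 1), (x - a) ^ k / k ! * g k a| ≤ M * (x - a) ^ (n + 1) / n ! := by
  have hs := uniqueDiffOn_Icc hab
  have hT := taylor_mean_remainder_bound hab.le (by exact_mod_cast hg.contDiffOn hs) hx
    fun t ht => by rw [Real.norm_eq_abs, hg.iteratedDerivWithin_eq hs le_rfl ht]; exact hM t ht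
  rw [Real.norm_eq_abs, taylor_within_apply] at hT
  convert hT using 3
  refine sum_congr rfl fun k hk => ?_
  rw [hg.iteratedDerivWithin_eq hs (by simp at hk; omega) (left_mem_Icc.2 hab.le), smul_eq_mul]
  ring

theorem abs_integral_sub_taylor_le {a h M : ℝ} (hg : IsDerivChainOn g (n + 1) (Icc a (a + h)))
    (hh : 0 < h) (hM : ∀ t ∈ Icc a (a + h), |g (n + 1) t| ≤ M) :
    |(∫ t in a..a + h, g 0 t) - ∑ k ∈ range (n + 1), h ^ (k + 1) / (k + 1)! * g k a|
      ≤ M * h ^ (n + 2) / ((n + 2) * n !) := by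
  have hah : a < a + h := by linarith
  have hg0 : IntervalIntegrable (g 0) volume a (a + h) :=
    hg.continuousOn.intervalIntegrable_of_Icc hah.le
  have hP : Continuous fun t => ∑ k ∈ range (n + 1), (t - a) ^ k / k ! * g k a := by fun_prop
  rw [← integral_taylor_sum, ← intervalIntegral.integral_sub hg0 (hP.intervalIntegrable _ _)]
  calc |∫ t in a..a + h, g 0 t - ∑ k ∈ range (n + 1), (t - a) ^ k / k ! * g k a|
        ≤ ∫ t in a..a + h, M * (t - a) ^ (n + 1) / n ! := by
          rw [← Real.norm_eq_abs]
          exact intervalIntegral.norm_integral_le_of_norm_le hah.le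
            (ae_of_all _ fun t ht => hg.abs_sub_taylor_le hah hM ⟨ht.1.le, ht.2⟩)
            ((by fun_prop : Continuous fun t => M * (t - a) ^ (n + 1) / n !).intervalIntegrable _ _)
    _ = M * h ^ (n + 2) / ((n + 2) * n !) := by
      rw [intervalIntegral.integral_div, intervalIntegral.integral_const_mul, integral_sub_pow]
      push_cast
      field_simp
      ring

theorem abs_corrected_trapezoid_error_le {a h M : ℝ} (hg : IsDerivChainOn g 4 (Icc a (a + h)))
    (hh : 0 < h) (hM : ∀ t ∈ Icc a (a + h), |g 4 t| ≤ M) :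
    |(∫ t in a..a + h, g 0 t) - h / 2 * (g 0 a + g 0 (a + h)) + h ^ 3 / 12 * g 2 (a + h / 2)|
      ≤ M * h ^ 5 := by
  have hah : a < a + h := by linarith
  have hI := hg.abs_integral_sub_taylor_le (n := 3) hh hM
  have hb := hg.abs_sub_taylor_le (n := 3) hah hM (right_mem_Icc.2 hah.le)
  have hc := (hg.shift (m := 2) (n := 2)).abs_sub_taylor_le (n := 1) (x := a + h / 2) hah hM
    ⟨by linarith, by linarith⟩
  norm_num [sum_range_succ, Nat.factorial] at hI hb hc
  -- The error is `hI - h/2 • hb + h³/12 • hc` (each read as its bounded quantity): the Taylor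
  -- coefficients of `g 2` and `g 3` cancel.
  have hM0 : 0 ≤ M := (abs_nonneg _).trans (hM a (left_mem_Icc.2 hah.le))
  have hMh : 0 ≤ M * h ^ 5 := by positivity
  rw [abs_le] at hI hb hc ⊢
  constructor <;> nlinarith [pow_pos hh 3]

theorem abs_midpoint_error_le {a h M : ℝ} (hg : IsDerivChainOn g 2 (Icc a (a + h)))
    (hh : 0 < h) (hM : ∀ t ∈ Icc a (a + h), |g 2 t| ≤ M) :
    |(∫ t in a..a + h, g 0 t) - h * g 0 (a + h / 2)| ≤ M * h ^ 3 := by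
  have hah : a < a + h := by linarith
  have hI := hg.abs_integral_sub_taylor_le (n := 1) hh hM
  have hc := hg.abs_sub_taylor_le (n := 1) (x := a + h / 2) hah hM ⟨by linarith, by linarith⟩
  norm_num [sum_range_succ] at hI hc
  have hM0 : 0 ≤ M := (abs_nonneg _).trans (hM a (left_mem_Icc.2 hah.le))
  have hMh : 0 ≤ M * h ^ 3 := by positivity
  rw [abs_le] at hI hc ⊢
  constructor <;> nlinarith

theorem abs_average_sub_midpoint_le {a h M : ℝ} (hg : IsDerivChainOn g 2 (Icc a (a + h)))
    (hh : 0 < h) (hM : ∀ t ∈ Icc a (a + h), |g 2 t| ≤ M) :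
    |(g 0 a + g 0 (a + h)) / 2 - g 0 (a + h / 2)| ≤ M * h ^ 2 := by
  have hah : a < a + h := by linarith
  have hb := hg.abs_sub_taylor_le (n := 1) hah hM (right_mem_Icc.2 hah.le)
  have hc := hg.abs_sub_taylor_le (n := 1) (x := a + h / 2) hah hM ⟨by linarith, by linarith⟩
  norm_num [sum_range_succ] at hb hc
  have hM0 : 0 ≤ M := (abs_nonneg _).trans (hM a (left_mem_Icc.2 hah.le))
  have hMh : 0 ≤ M * h ^ 2 := by positivity
  rw [abs_le] at hb hc ⊢
  constructor <;> nlinarith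

end IsDerivChainOn

section IteratedFDerivList

variable {E F : Type*} [NormedAddCommGroup E] [NormedSpace ℝ E] [NormedAddCommGroup F]
  [NormedSpace ℝ F] {f : E → F} {U : Set E} {n : WithTop ℕ∞} {L : List E}

/-- `iteratedFDerivList f [v₁, …, vₖ] p = Dᵏf(p)(v₁, …, vₖ)`; on `ℝ × ℝ`, the list
`[(1, 0), (1, 0)]` gives `∂²f/∂x²`. -/
noncomputable def iteratedFDerivList (f : E → F) (L : List E) (p : E) : F :=
  iteratedFDeriv ℝ L.length f p L.get

@[simp]
theorem iteratedFDerivList_nil (f : E → F) : iteratedFDerivList f [] = f := by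
  funext p
  simp [iteratedFDerivList]

theorem norm_iteratedFDerivList_le (f : E → F) (p : E) (hL : ∀ v ∈ L, ‖v‖ ≤ 1) :
    ‖iteratedFDerivList f L p‖ ≤ ‖iteratedFDeriv ℝ L.length f p‖ :=
  (ContinuousMultilinearMap.le_opNorm _ _).trans <| mul_le_of_le_one_right (norm_nonneg _) <|
    prod_le_one (fun _ _ => norm_nonneg _) fun i _ => hL _ (L.get_mem i)

theorem continuousOn_iteratedFDerivList (hU : IsOpen U) (hf : ContDiffOn ℝ n f U)
    (hL : L.length ≤ n) : ContinuousOn (iteratedFDerivList f L) U :=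
  (ContinuousMultilinearMap.apply ℝ _ F L.get).continuous.comp_continuousOn
    (ContinuousOn.continuousOn_iteratedFDeriv hf hU hL)

theorem HasDerivAt.iteratedFDerivList {γ : ℝ → E} {v : E} {t : ℝ} (hγ : HasDerivAt γ v t)
    (hU : IsOpen U) (hf : ContDiffOn ℝ n f U) (hL : L.length < n) (ht : γ t ∈ U) :
    HasDerivAt (fun s => iteratedFDerivList f L (γ s)) (iteratedFDerivList f (v :: L) (γ t)) t := by
  have hd := (hf.contDiffAt (hU.mem_nhds ht)).differentiableAt_iteratedFDeriv hL
  convert (hd.hasFDerivAt.continuousMultilinear_apply_const L.get).comp_hasDerivAt t hγ using 1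
  · rfl
  · exact iteratedFDeriv_succ_apply_left _

theorem isDerivChainOn_iteratedFDerivList_comp {f : E → ℝ} {γ : ℝ → E} {v : E} {s : Set ℝ}
    {m : ℕ} (hγ : ∀ t, HasDerivAt γ v t) (hU : IsOpen U) (hf : ContDiffOn ℝ n f U)
    (hLm : ((L.length + m : ℕ) : WithTop ℕ∞) ≤ n) (hs : MapsTo γ s U) :
    IsDerivChainOn (fun k t => iteratedFDerivList f (List.replicate k v ++ L) (γ t)) m s := by
  refine ⟨fun k hk t ht => ((hγ t).iteratedFDerivList hU hf ?_ (hs ht)).hasDerivWithinAt, ?_⟩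
  · exact lt_of_lt_of_le (by norm_cast; simp; omega) hLm
  · exact (continuousOn_iteratedFDerivList hU hf (le_of_eq_of_le (by simp [add_comm]) hLm)).comp
      (continuous_iff_continuousAt.2 fun t => (hγ t).continuousAt).continuousOn hs

end IteratedFDerivList

section Plane

open Filter Topology

variable {f : ℝ × ℝ → ℝ} {U : Set (ℝ × ℝ)} {n : WithTop ℕ∞} {L : List (ℝ × ℝ)} {p : ℝ × ℝ}

theorem hasDerivAt_prodMk_left (y t : ℝ) : HasDerivAt (fun x : ℝ => (x, y)) ((1 : ℝ), (0 : ℝ)) t :=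
  (hasDerivAt_id t).prodMk (hasDerivAt_const t y)

theorem hasDerivAt_prodMk_right (x t : ℝ) : HasDerivAt (fun y : ℝ => (x, y)) ((0 : ℝ), (1 : ℝ)) t :=
  (hasDerivAt_const t x).prodMk (hasDerivAt_id t)

theorem pdx_iteratedFDerivList (hU : IsOpen U) (hf : ContDiffOn ℝ n f U) (hL : L.length < n)
    (hp : p ∈ U) : pdx (iteratedFDerivList f L) p = iteratedFDerivList f ((1, 0) :: L) p :=
  ((hasDerivAt_prodMk_left p.2 p.1).iteratedFDerivList hU hf hL hp).deriv

theorem pdy_iteratedFDerivList (hU : IsOpen U) (hf : ContDiffOn ℝ n f U) (hL : L.length < n)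
    (hp : p ∈ U) : pdy (iteratedFDerivList f L) p = iteratedFDerivList f ((0, 1) :: L) p :=
  ((hasDerivAt_prodMk_right p.1 p.2).iteratedFDerivList hU hf hL hp).deriv

theorem Filter.EventuallyEq.pdx_eq {g : ℝ × ℝ → ℝ} (hfg : f =ᶠ[𝓝 p] g) : pdx f p = pdx g p :=
  (hfg.comp_tendsto (hasDerivAt_prodMk_left p.2 p.1).continuousAt.tendsto).deriv_eq

theorem Filter.EventuallyEq.pdy_eq {g : ℝ × ℝ → ℝ} (hfg : f =ᶠ[𝓝 p] g) : pdy f p = pdy g p :=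
  (hfg.comp_tendsto (hasDerivAt_prodMk_right p.1 p.2).continuousAt.tendsto).deriv_eq

theorem lap2_eq_iteratedFDerivList (hU : IsOpen U) (hf : ContDiffOn ℝ n f U) (hn : 2 ≤ n)
    (hp : p ∈ U) :
    lap2 f p
      = iteratedFDerivList f [(1, 0), (1, 0)] p + iteratedFDerivList f [(0, 1), (0, 1)] p := by
  have hlt : ∀ k : ℕ, k < 2 → (k : WithTop ℕ∞) < n := fun k hk =>
    lt_of_lt_of_le (by exact_mod_cast hk) hn
  have hx : pdx f =ᶠ[𝓝 p] iteratedFDerivList f [(1, 0)] :=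
    eventually_of_mem (hU.mem_nhds hp) fun q hq => by
      simpa using pdx_iteratedFDerivList (L := []) hU hf (hlt 0 two_pos) hq
  have hy : pdy f =ᶠ[𝓝 p] iteratedFDerivList f [(0, 1)] :=
    eventually_of_mem (hU.mem_nhds hp) fun q hq => by
      simpa using pdy_iteratedFDerivList (L := []) hU hf (hlt 0 two_pos) hq
  rw [lap2, hx.pdx_eq, hy.pdy_eq,
    pdx_iteratedFDerivList (L := [(1, 0)]) hU hf (hlt 1 one_lt_two) hp,
    pdy_iteratedFDerivList (L := [(0, 1)]) hU hf (hlt 1 one_lt_two) hp]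

end Plane

section Fubini

variable {E : Type*} [NormedAddCommGroup E] [NormedSpace ℝ E] {f : ℝ × ℝ → E} {a b c d : ℝ}

theorem setIntegral_Icc_prod_Icc (hf : IntegrableOn f (Icc a b ×ˢ Icc c d)) (hab : a ≤ b)
    (hcd : c ≤ d) :
    ∫ p in Icc a b ×ˢ Icc c d, f p = ∫ x in a..b, ∫ y in c..d, f (x, y) := by
  simp only [intervalIntegral.integral_of_le, hab, hcd,
    setIntegral_congr_set (Ioc_ae_eq_Icc (α := ℝ) (μ := volume))]
  exact setIntegral_prod f hf

theorem MeasureTheory.IntegrableOn.intervalIntegrable_integral_Icc_prod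
    (hf : IntegrableOn f (Icc a b ×ˢ Icc c d)) (hab : a ≤ b) (hcd : c ≤ d) :
    IntervalIntegrable (fun x => ∫ y in c..d, f (x, y)) volume a b := by
  rw [intervalIntegrable_iff_integrableOn_Icc_of_le hab]
  have := (show Integrable f ((volume.restrict (Icc a b)).prod (volume.restrict (Icc c d))) by
    rwa [Measure.prod_restrict]).integral_prod_left
  refine this.congr (ae_of_all _ fun x => ?_)
  simp only [intervalIntegral.integral_of_le hcd,
    setIntegral_congr_set (Ioc_ae_eq_Icc (α := ℝ) (μ := volume))]

end Fubini

section Cell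

variable {f : ℝ × ℝ → ℝ} {U : Set (ℝ × ℝ)} {x₀ y₀ h M : ℝ}

theorem abs_corrected_trapezoid_error_fst_le (hh : 0 < h) (hU : IsOpen U) (hf : ContDiffOn ℝ 4 f U)
    (hSU : Icc x₀ (x₀ + h) ×ˢ Icc y₀ (y₀ + h) ⊆ U)
    (hM : ∀ p ∈ Icc x₀ (x₀ + h) ×ˢ Icc y₀ (y₀ + h), ‖iteratedFDeriv ℝ 4 f p‖ ≤ M)
    {y : ℝ} (hy : y ∈ Icc y₀ (y₀ + h)) :
    |(∫ x in x₀..x₀ + h, f (x, y)) - h / 2 * (f (x₀, y) + f (x₀ + h, y))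
      + h ^ 3 / 12 * iteratedFDerivList f [(1, 0), (1, 0)] (x₀ + h / 2, y)| ≤ M * h ^ 5 := by
  have hg := isDerivChainOn_iteratedFDerivList_comp (L := []) (m := 4)
    (hasDerivAt_prodMk_left y) hU hf (by simp) fun x hx => hSU ⟨hx, hy⟩
  simpa using hg.abs_corrected_trapezoid_error_le hh fun t ht =>
    (norm_iteratedFDerivList_le f _ (by simp)).trans (hM _ ⟨ht, hy⟩)

theorem abs_corrected_trapezoid_error_snd_le (hh : 0 < h) (hU : IsOpen U) (hf : ContDiffOn ℝ 4 f U)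
    (hSU : Icc x₀ (x₀ + h) ×ˢ Icc y₀ (y₀ + h) ⊆ U)
    (hM : ∀ p ∈ Icc x₀ (x₀ + h) ×ˢ Icc y₀ (y₀ + h), ‖iteratedFDeriv ℝ 4 f p‖ ≤ M)
    {x : ℝ} (hx : x ∈ Icc x₀ (x₀ + h)) :
    |(∫ y in y₀..y₀ + h, f (x, y)) - h / 2 * (f (x, y₀) + f (x, y₀ + h))
      + h ^ 3 / 12 * iteratedFDerivList f [(0, 1), (0, 1)] (x, y₀ + h / 2)| ≤ M * h ^ 5 := by
  have hg := isDerivChainOn_iteratedFDerivList_comp (L := []) (m := 4)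
    (hasDerivAt_prodMk_right x) hU hf (by simp) fun y hy => hSU ⟨hx, hy⟩
  simpa using hg.abs_corrected_trapezoid_error_le hh fun t ht =>
    (norm_iteratedFDerivList_le f _ (by simp)).trans (hM _ ⟨hx, ht⟩)

theorem abs_midpoint_error_fst_le (hh : 0 < h) (hU : IsOpen U) (hf : ContDiffOn ℝ 4 f U)
    (hSU : Icc x₀ (x₀ + h) ×ˢ Icc y₀ (y₀ + h) ⊆ U)
    (hM : ∀ p ∈ Icc x₀ (x₀ + h) ×ˢ Icc y₀ (y₀ + h), ‖iteratedFDeriv ℝ 4 f p‖ ≤ M)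
    {y : ℝ} (hy : y ∈ Icc y₀ (y₀ + h)) :
    |(∫ x in x₀..x₀ + h, iteratedFDerivList f [(0, 1), (0, 1)] (x, y))
      - h * iteratedFDerivList f [(0, 1), (0, 1)] (x₀ + h / 2, y)| ≤ M * h ^ 3 := by
  have hg := isDerivChainOn_iteratedFDerivList_comp (L := [(0, 1), (0, 1)]) (m := 2)
    (hasDerivAt_prodMk_left y) hU hf (by norm_num) fun x hx => hSU ⟨hx, hy⟩
  simpa using hg.abs_midpoint_error_le hh fun t ht =>
    (norm_iteratedFDerivList_le f _ (by simp)).trans (hM _ ⟨ht, hy⟩)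

theorem abs_average_sub_midpoint_snd_le (hh : 0 < h) (hU : IsOpen U) (hf : ContDiffOn ℝ 4 f U)
    (hSU : Icc x₀ (x₀ + h) ×ˢ Icc y₀ (y₀ + h) ⊆ U)
    (hM : ∀ p ∈ Icc x₀ (x₀ + h) ×ˢ Icc y₀ (y₀ + h), ‖iteratedFDeriv ℝ 4 f p‖ ≤ M)
    {x : ℝ} (hx : x ∈ Icc x₀ (x₀ + h)) :
    |(iteratedFDerivList f [(1, 0), (1, 0)] (x, y₀)
        + iteratedFDerivList f [(1, 0), (1, 0)] (x, y₀ + h)) / 2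
      - iteratedFDerivList f [(1, 0), (1, 0)] (x, y₀ + h / 2)| ≤ M * h ^ 2 := by
  have hg := isDerivChainOn_iteratedFDerivList_comp (L := [(1, 0), (1, 0)]) (m := 2)
    (hasDerivAt_prodMk_right x) hU hf (by norm_num) fun y hy => hSU ⟨hx, hy⟩
  simpa using hg.abs_average_sub_midpoint_le hh fun t ht =>
    (norm_iteratedFDerivList_le f _ (by simp)).trans (hM _ ⟨hx, ht⟩)

theorem abs_integral_corrected_trapezoid_error_snd_le (hh : 0 < h) (hU : IsOpen U)
    (hf : ContDiffOn ℝ 4 f U) (hSU : Icc x₀ (x₀ + h) ×ˢ Icc y₀ (y₀ + h) ⊆ U)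
    (hM : ∀ p ∈ Icc x₀ (x₀ + h) ×ˢ Icc y₀ (y₀ + h), ‖iteratedFDeriv ℝ 4 f p‖ ≤ M) :
    |(∫ x in x₀..x₀ + h, ∫ y in y₀..y₀ + h, f (x, y))
      - h / 2 * ((∫ x in x₀..x₀ + h, f (x, y₀)) + ∫ x in x₀..x₀ + h, f (x, y₀ + h))
      + h ^ 3 / 12 * ∫ x in x₀..x₀ + h, iteratedFDerivList f [(0, 1), (0, 1)] (x, y₀ + h / 2)|
      ≤ M * h ^ 6 := by
  have hxh : x₀ ≤ x₀ + h := by linarith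
  have hyh : y₀ ≤ y₀ + h := by linarith
  have hslice {g : ℝ × ℝ → ℝ} {y : ℝ} (hg : ContinuousOn g U) (hy : y ∈ Icc y₀ (y₀ + h)) :
      IntervalIntegrable (fun x => g (x, y)) volume x₀ (x₀ + h) :=
    (hg.comp (continuous_id.prodMk continuous_const).continuousOn
      fun x hx => hSU ⟨hx, hy⟩).intervalIntegrable_of_Icc hxh
  have hF := ((hf.continuousOn.mono hSU).integrableOn_compact
    (isCompact_Icc.prod isCompact_Icc)).intervalIntegrable_integral_Icc_prod hxh hyh
  have h₀ := hslice hf.continuousOn (left_mem_Icc.2 hyh)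
  have h₁ := hslice hf.continuousOn (right_mem_Icc.2 hyh)
  have hD := hslice (continuousOn_iteratedFDerivList (L := [(0, 1), (0, 1)]) hU hf (by norm_num))
    (y := y₀ + h / 2) ⟨by linarith, by linarith⟩
  calc _ = |∫ x in x₀..x₀ + h, (∫ y in y₀..y₀ + h, f (x, y))
        - h / 2 * (f (x, y₀) + f (x, y₀ + h))
        + h ^ 3 / 12 * iteratedFDerivList f [(0, 1), (0, 1)] (x, y₀ + h / 2)| := by
        rw [intervalIntegral.integral_add (hF.sub ((h₀.add h₁).const_mul _)) (hD.const_mul _),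
          intervalIntegral.integral_sub hF ((h₀.add h₁).const_mul _),
          intervalIntegral.integral_const_mul, intervalIntegral.integral_const_mul,
          intervalIntegral.integral_add h₀ h₁]
    _ ≤ M * h ^ 5 * |x₀ + h - x₀| := by
        rw [← Real.norm_eq_abs]
        exact intervalIntegral.norm_integral_le_of_norm_le_const fun x hx =>
          abs_corrected_trapezoid_error_snd_le hh hU hf hSU hM (Ioc_subset_Icc_self (uIoc_of_le hxh ▸ hx))
    _ = M * h ^ 6 := by rw [add_sub_cancel_left, abs_of_pos hh]; ring

end Cell

/-- Single-cell error expansion for the two-dimensional trapezoidal rule, with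
leading error term `(h⁴/12)·Δf` at the cell center. -/
theorem trapezoidal_cell_error :
    ∃ C : ℝ, 0 < C ∧
      ∀ (h x₀ y₀ : ℝ) (f : ℝ × ℝ → ℝ) (M₄ : ℝ) (U : Set (ℝ × ℝ)),
        0 < h → IsOpen U → Icc x₀ (x₀ + h) ×ˢ Icc y₀ (y₀ + h) ⊆ U →
        ContDiffOn ℝ 4 f U →
        (∀ p ∈ Icc x₀ (x₀ + h) ×ˢ Icc y₀ (y₀ + h),
          ∀ k : ℕ, k ≤ 4 → ‖iteratedFDeriv ℝ k f p‖ ≤ M₄) →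
        |(∫ p in Icc x₀ (x₀ + h) ×ˢ Icc y₀ (y₀ + h), f p)
            - (h ^ 2 / 4) * (f (x₀, y₀) + f (x₀ + h, y₀) + f (x₀, y₀ + h)
                + f (x₀ + h, y₀ + h))
            + (h ^ 4 / 12) * lap2 f (x₀ + h / 2, y₀ + h / 2)|
          ≤ C * M₄ * h ^ 6 := by
  refine ⟨3, by norm_num, fun h x₀ y₀ f M₄ U hh hU hSU hf hM => ?_⟩
  have hM₄ : ∀ p ∈ Icc x₀ (x₀ + h) ×ˢ Icc y₀ (y₀ + h), ‖iteratedFDeriv ℝ 4 f p‖ ≤ M₄ :=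
    fun p hp => hM p hp 4 le_rfl
  have hxh : x₀ ≤ x₀ + h := by linarith
  have hyh : y₀ ≤ y₀ + h := by linarith
  have hcx : x₀ + h / 2 ∈ Icc x₀ (x₀ + h) := ⟨by linarith, by linarith⟩
  have hcy : y₀ + h / 2 ∈ Icc y₀ (y₀ + h) := ⟨by linarith, by linarith⟩
  have hM₀ : 0 ≤ M₄ := (norm_nonneg _).trans (hM₄ (_, _) ⟨hcx, hcy⟩)
  have hY := abs_integral_corrected_trapezoid_error_snd_le hh hU hf hSU hM₄
  have hX₀ := abs_corrected_trapezoid_error_fst_le hh hU hf hSU hM₄ (left_mem_Icc.2 hyh)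
  have hX₁ := abs_corrected_trapezoid_error_fst_le hh hU hf hSU hM₄ (right_mem_Icc.2 hyh)
  have hB := abs_midpoint_error_fst_le hh hU hf hSU hM₄ hcy
  have hC := abs_average_sub_midpoint_snd_le hh hU hf hSU hM₄ hcx
  rw [setIntegral_Icc_prod_Icc ((hf.continuousOn.mono hSU).integrableOn_compact
    (isCompact_Icc.prod isCompact_Icc)) hxh hyh,
    lap2_eq_iteratedFDerivList hU hf (by norm_num) (hSU ⟨hcx, hcy⟩)]
  have hMh : 0 ≤ M₄ * h ^ 6 := by positivity
  -- The error is `hY + h/2 • (hX₀ + hX₁) - h³/12 • hB - h⁴/12 • hC`, each read as its bounded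
  -- quantity.
  rw [abs_le] at hY hX₀ hX₁ hB hC ⊢
  constructor <;> nlinarith [pow_pos hh 3, pow_pos hh 4]
end

section
/- Let γ : [0,1] → ℝ² be Lipschitz continuous with Lipschitz constant L ≥ 0, and let h > 0. Consider the grid cells C_{i,j} = [i·h, (i+1)·h] × [j·h, (j+1)·h] for (i,j) ∈ ℤ². Then the number of pairs (i,j) ∈ ℤ² such that C_{i,j} intersects the image γ([0,1]) is at most 4·(L/h + 1). -/
open Set

/-- A Lipschitz curve with Lipschitz constant `L` meets at most `4·(L/h + 1)` of
the grid cells `C_{i,j} = [ih, (i+1)h] × [jh, (j+1)h]` of mesh size `h`. -/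
theorem lipschitz_curve_meets_few_cells
    (γ : ℝ → EuclideanSpace ℝ (Fin 2)) (L : ℝ) (hL : 0 ≤ L)
    (hγ : ∀ s ∈ Icc (0:ℝ) 1, ∀ t ∈ Icc (0:ℝ) 1, dist (γ s) (γ t) ≤ L * |s - t|)
    (h : ℝ) (hh : 0 < h) :
    {ij : ℤ × ℤ | ∃ s ∈ Icc (0:ℝ) 1,
        γ s 0 ∈ Icc ((ij.1 : ℝ) * h) (((ij.1 : ℝ) + 1) * h) ∧
        γ s 1 ∈ Icc ((ij.2 : ℝ) * h) (((ij.2 : ℝ) + 1) * h)}.Finite ∧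
    ({ij : ℤ × ℤ | ∃ s ∈ Icc (0:ℝ) 1,
        γ s 0 ∈ Icc ((ij.1 : ℝ) * h) (((ij.1 : ℝ) + 1) * h) ∧
        γ s 1 ∈ Icc ((ij.2 : ℝ) * h) (((ij.2 : ℝ) + 1) * h)}.ncard : ℝ)
      ≤ 4 * (L / h + 1) := by
  classical
  -- coordinatewise Lipschitz bound
  have hcoord : ∀ (n : Fin 2), ∀ s ∈ Icc (0:ℝ) 1, ∀ t ∈ Icc (0:ℝ) 1,
      |γ s n - γ t n| ≤ L * |s - t| := by
    intro n s hs t ht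
    refine le_trans ?_ (hγ s hs t ht)
    rw [EuclideanSpace.dist_eq, ← Real.sqrt_sq_eq_abs]
    apply Real.sqrt_le_sqrt
    have h1 : (γ s n - γ t n)^2 = dist (γ s n) (γ t n)^2 := by rw [Real.dist_eq, sq_abs]
    rw [h1]
    exact Finset.single_le_sum (f := fun i => dist (γ s i) (γ t i)^2)
      (fun i _ => sq_nonneg _) (Finset.mem_univ n)
  set N : ℕ := ⌊L / h⌋₊ + 1 with hNdef
  have hN0 : (0:ℝ) < (N:ℝ) := by positivity
  have hLhN : L / h < (N:ℝ) := by
    have := Nat.lt_floor_add_one (L / h)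
    simpa [hNdef] using this
  have hLN : L / (N:ℝ) < h := by
    rw [div_lt_iff₀ hN0]
    have := (div_lt_iff₀ hh).mp hLhN
    nlinarith
  -- piece membership predicate
  set P : ℕ → ℤ × ℤ → Prop := fun k ij => ∃ s, s ∈ Icc (0:ℝ) 1 ∧
      (k:ℝ)/(N:ℝ) ≤ s ∧ s ≤ ((k:ℝ)+1)/(N:ℝ) ∧
      γ s 0 ∈ Icc ((ij.1 : ℝ) * h) (((ij.1 : ℝ) + 1) * h) ∧
      γ s 1 ∈ Icc ((ij.2 : ℝ) * h) (((ij.2 : ℝ) + 1) * h) with hPdef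
  -- on a piece, coordinates move by less than h
  have hosc : ∀ k : ℕ, ∀ (n : Fin 2), ∀ s s' : ℝ,
      s ∈ Icc (0:ℝ) 1 → (k:ℝ)/(N:ℝ) ≤ s → s ≤ ((k:ℝ)+1)/(N:ℝ) →
      s' ∈ Icc (0:ℝ) 1 → (k:ℝ)/(N:ℝ) ≤ s' → s' ≤ ((k:ℝ)+1)/(N:ℝ) →
      |γ s n - γ s' n| < h := by
    intro k n s s' hs hs1 hs2 hs' hs'1 hs'2
    have e1 : (k:ℝ) ≤ s * N := (div_le_iff₀ hN0).mp hs1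
    have e2 : s * N ≤ (k:ℝ) + 1 := by rw [← le_div_iff₀ hN0]; exact hs2
    have e3 : (k:ℝ) ≤ s' * N := (div_le_iff₀ hN0).mp hs'1
    have e4 : s' * N ≤ (k:ℝ) + 1 := by rw [← le_div_iff₀ hN0]; exact hs'2
    have habs : |s - s'| ≤ 1 / (N:ℝ) := by
      rw [abs_sub_le_iff]
      constructor <;> · rw [le_div_iff₀ hN0]; nlinarith
    calc |γ s n - γ s' n| ≤ L * |s - s'| := hcoord n s hs s' hs'
      _ ≤ L * (1 / (N:ℝ)) := by
          exact mul_le_mul_of_nonneg_left habs hL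
      _ = L / (N:ℝ) := by ring
      _ < h := hLN
  -- key: two cells met by the same piece have close indices
  have key1 : ∀ k ij ij', P k ij → P k ij' → ij'.1 ≤ ij.1 + 1 := by
    intro k ij ij' ⟨s, hs, hs1, hs2, hx, _⟩ ⟨s', hs', hs'1, hs'2, hx', _⟩
    have hd := hosc k 0 s s' hs hs1 hs2 hs' hs'1 hs'2
    have h1 : (ij'.1 : ℝ) * h ≤ γ s' 0 := hx'.1
    have h2 : γ s 0 ≤ ((ij.1 : ℝ) + 1) * h := hx.2
    have h3 : γ s' 0 - γ s 0 < h := by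
      have := abs_lt.mp (by rwa [abs_sub_comm] at hd)
      linarith [this.2]
    have h4 : (ij'.1 : ℝ) < (ij.1 : ℝ) + 2 := by nlinarith
    have h5 : ij'.1 < ij.1 + 2 := by exact_mod_cast h4
    omega
  have key2 : ∀ k ij ij', P k ij → P k ij' → ij'.2 ≤ ij.2 + 1 := by
    intro k ij ij' ⟨s, hs, hs1, hs2, _, hy⟩ ⟨s', hs', hs'1, hs'2, _, hy'⟩
    have hd := hosc k 1 s s' hs hs1 hs2 hs' hs'1 hs'2
    have h1 : (ij'.2 : ℝ) * h ≤ γ s' 1 := hy'.1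
    have h2 : γ s 1 ≤ ((ij.2 : ℝ) + 1) * h := hy.2
    have h3 : γ s' 1 - γ s 1 < h := by
      have := abs_lt.mp (by rwa [abs_sub_comm] at hd)
      linarith [this.2]
    have h4 : (ij'.2 : ℝ) < (ij.2 : ℝ) + 2 := by nlinarith
    have h5 : ij'.2 < ij.2 + 2 := by exact_mod_cast h4
    omega
  -- per piece, at most 4 cells
  have hB : ∀ k : ℕ, ∃ B : Finset (ℤ × ℤ), B.card ≤ 4 ∧ ∀ ij, P k ij → ij ∈ B := by
    intro k
    by_cases hk : ∃ ij, P k ij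
    · obtain ⟨ij₁, hij₁⟩ := hk
      -- least first coordinate
      obtain ⟨i₀, ⟨j₀', hi₀⟩, hi₀min⟩ := Int.exists_least_of_bdd
        (P := fun i => ∃ j, P k (i, j))
        ⟨ij₁.1 - 1, fun z ⟨j, hz⟩ => by
          have := key1 k (z, j) ij₁ hz hij₁; simp at this; omega⟩
        ⟨ij₁.1, ij₁.2, by simpa using hij₁⟩
      obtain ⟨j₀, ⟨i₀', hj₀⟩, hj₀min⟩ := Int.exists_least_of_bdd
        (P := fun j => ∃ i, P k (i, j))
        ⟨ij₁.2 - 1, fun z ⟨i, hz⟩ => by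
          have := key2 k (i, z) ij₁ hz hij₁; simp at this; omega⟩
        ⟨ij₁.2, ij₁.1, by simpa using hij₁⟩
      refine ⟨({i₀, i₀+1} : Finset ℤ) ×ˢ ({j₀, j₀+1} : Finset ℤ), ?_, ?_⟩
      · have c1 : ({i₀, i₀+1} : Finset ℤ).card ≤ 2 :=
          (Finset.card_insert_le _ _).trans (by simp)
        have c2 : ({j₀, j₀+1} : Finset ℤ).card ≤ 2 :=
          (Finset.card_insert_le _ _).trans (by simp)
        calc (({i₀, i₀+1} : Finset ℤ) ×ˢ ({j₀, j₀+1} : Finset ℤ)).card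
            = ({i₀, i₀+1} : Finset ℤ).card * ({j₀, j₀+1} : Finset ℤ).card :=
              Finset.card_product _ _
          _ ≤ 2 * 2 := Nat.mul_le_mul c1 c2
          _ = 4 := rfl
      · intro ij hij
        have hile : ij.1 ≤ i₀ + 1 := key1 k (i₀, j₀') ij hi₀ hij
        have hige : i₀ ≤ ij.1 := hi₀min ij.1 ⟨ij.2, by simpa using hij⟩
        have hjle : ij.2 ≤ j₀ + 1 := key2 k (i₀', j₀) ij hj₀ hij
        have hjge : j₀ ≤ ij.2 := hj₀min ij.2 ⟨ij.1, by simpa using hij⟩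
        simp only [Finset.mem_product, Finset.mem_insert, Finset.mem_singleton]
        omega
    · exact ⟨∅, by simp, fun ij hij => absurd ⟨ij, hij⟩ hk⟩
  choose B hBcard hBmem using hB
  -- the covering finset
  set T : Finset (ℤ × ℤ) := (Finset.range N).biUnion B with hTdef
  have hcover : {ij : ℤ × ℤ | ∃ s ∈ Icc (0:ℝ) 1,
        γ s 0 ∈ Icc ((ij.1 : ℝ) * h) (((ij.1 : ℝ) + 1) * h) ∧
        γ s 1 ∈ Icc ((ij.2 : ℝ) * h) (((ij.2 : ℝ) + 1) * h)} ⊆ ↑T := by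
    rintro ij ⟨s, hs, hx, hy⟩
    have hs0 : 0 ≤ s := hs.1
    have hs1 : s ≤ 1 := hs.2
    have hkey : ∃ k : ℕ, k < N ∧ P k ij := by
      rcases eq_or_lt_of_le hs1 with heq | hlt
      · have hNpos : 0 < N := Nat.succ_pos _
        have hc : ((N - 1 : ℕ) : ℝ) = (N:ℝ) - 1 := by
          rw [Nat.cast_sub hNpos]; simp
        refine ⟨N - 1, Nat.sub_lt hNpos one_pos, s, hs, ?_, ?_, hx, hy⟩
        · rw [hc, heq, div_le_one hN0]; linarith
        · rw [hc, heq, le_div_iff₀ hN0]; linarith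
      · refine ⟨⌊s * N⌋₊, ?_, s, hs, ?_, ?_, hx, hy⟩
        · rw [Nat.floor_lt (by positivity)]
          nlinarith
        · rw [div_le_iff₀ hN0]
          exact Nat.floor_le (by positivity)
        · rw [le_div_iff₀ hN0]
          have := Nat.lt_floor_add_one (s * N)
          linarith
    obtain ⟨k, hkN, hPk⟩ := hkey
    simp only [hTdef, Finset.coe_biUnion, Finset.mem_coe, Finset.mem_range, mem_iUnion]
    exact ⟨k, hkN, hBmem k ij hPk⟩
  have hfin : {ij : ℤ × ℤ | ∃ s ∈ Icc (0:ℝ) 1,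
        γ s 0 ∈ Icc ((ij.1 : ℝ) * h) (((ij.1 : ℝ) + 1) * h) ∧
        γ s 1 ∈ Icc ((ij.2 : ℝ) * h) (((ij.2 : ℝ) + 1) * h)}.Finite :=
    Set.Finite.subset (T.finite_toSet) hcover
  refine ⟨hfin, ?_⟩
  have hcard1 : {ij : ℤ × ℤ | ∃ s ∈ Icc (0:ℝ) 1,
        γ s 0 ∈ Icc ((ij.1 : ℝ) * h) (((ij.1 : ℝ) + 1) * h) ∧
        γ s 1 ∈ Icc ((ij.2 : ℝ) * h) (((ij.2 : ℝ) + 1) * h)}.ncard ≤ T.card := by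
    rw [← Set.ncard_coe_finset T]
    exact Set.ncard_le_ncard hcover T.finite_toSet
  have hcard2 : T.card ≤ 4 * N := by
    calc T.card ≤ ∑ k ∈ Finset.range N, (B k).card := Finset.card_biUnion_le
      _ ≤ ∑ k ∈ Finset.range N, 4 := Finset.sum_le_sum (fun k _ => hBcard k)
      _ = 4 * N := by rw [Finset.sum_const, Finset.card_range]; ring
  have hNle : (N:ℝ) ≤ L / h + 1 := by
    have : (⌊L / h⌋₊ : ℝ) ≤ L / h := Nat.floor_le (by positivity)
    simp only [hNdef]
    push_cast
    linarith
  calc ({ij : ℤ × ℤ | ∃ s ∈ Icc (0:ℝ) 1,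
        γ s 0 ∈ Icc ((ij.1 : ℝ) * h) (((ij.1 : ℝ) + 1) * h) ∧
        γ s 1 ∈ Icc ((ij.2 : ℝ) * h) (((ij.2 : ℝ) + 1) * h)}.ncard : ℝ)
      ≤ ((4 * N : ℕ) : ℝ) := by exact_mod_cast hcard1.trans hcard2
    _ = 4 * (N:ℝ) := by push_cast; ring
    _ ≤ 4 * (L / h + 1) := by linarith
end

section
/- Let a > 0 and b > 0 and let u : ℝ² → ℝ be four times continuously differentiable on a neighborhood of the rectangle R = [0,a] × [0,b], with u(x,y) = 0 whenever (x,y) lies on the boundary ∂R. Then there exists a constant C > 0, depending only on u, a, and b, such that for all positive integers N, M, setting h = a/N and assuming b/h = M (so the grid is uniform with mesh size h in both directions), the composite two-dimensional trapezoidal approximation T_h = h² · Σ_{i=1}^{N-1} Σ_{j=1}^{M-1} u(ih, jh)² of ∫_R u² satisfies |∫_R u(x,y)² dx dy − T_h| ≤ C·h³. -/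
/-!
On a cell `[c, c + h]`, two integrations by parts against the Peano kernel
`P(x) = (x - c)(c + h - x)/2` show that the trapezoidal error corrected by the end term
`h²/12 · (g'(c + h) - g'(c))` equals `∫ (h²/12 - P) g''`; since `h²/12 - P` has mean zero this is
`O(h⁴ sup |g'''|)`. Over a uniform partition the end terms telescope to `h²/12 · (g'(L) - g'(0))`,
which vanishes for `g = u(·, y)²` because `u = 0` on the boundary forces `∂(u²) = 2u ∂u = 0` there,
so the composite rule is `O(h³)` along every grid line. By Fubini, the two-dimensional error is
the integral of the errors of the `y`-rule plus `h` times the sum of the errors of the `x`-rule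
along the interior grid rows, each `O(h³)`.
-/

open MeasureTheory Set Finset

noncomputable def trapezoidKernel (c h x : ℝ) : ℝ := (x - c) * (c + h - x) / 2

lemma hasDerivAt_trapezoidKernel (c h x : ℝ) :
    HasDerivAt (trapezoidKernel c h) (c + h / 2 - x) x :=
  ((((hasDerivAt_id' x).sub_const c).mul
    ((hasDerivAt_id' x).const_sub (c + h))).div_const 2).congr_deriv (by ring)

lemma integral_trapezoidKernel (c h : ℝ) :
    ∫ x in c..c + h, trapezoidKernel c h x = h ^ 3 / 12 := by
  have hF : ∀ x, HasDerivAt (fun x => (h * (x - c) ^ 2 / 2 - (x - c) ^ 3 / 3) / 2)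
      (trapezoidKernel c h x) x := by
    intro x
    refine ((((((hasDerivAt_id' x).sub_const c).pow 2).const_mul h).div_const 2).sub
      ((((hasDerivAt_id' x).sub_const c).pow 3).div_const 3)).div_const 2 |>.congr_deriv ?_
    simp only [trapezoidKernel]; push_cast; ring
  rw [intervalIntegral.integral_eq_sub_of_hasDerivAt (fun x _ => hF x)
    (Continuous.intervalIntegrable (by unfold trapezoidKernel; fun_prop) _ _)]
  ring

lemma abs_sub_trapezoidKernel_le {c h x : ℝ} (hx : x ∈ Icc c (c + h)) :
    |h ^ 2 / 12 - trapezoidKernel c h x| ≤ h ^ 2 / 12 := by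
  obtain ⟨hcx, hxh⟩ := hx
  unfold trapezoidKernel
  rw [abs_le]
  constructor <;> nlinarith [sq_nonneg (x - c - h / 2)]

section Cell

variable {g g' g'' g''' : ℝ → ℝ} {c h K : ℝ}

lemma integral_trapezoidKernel_mul (hh : 0 ≤ h)
    (hg : ∀ x ∈ Icc c (c + h), HasDerivAt g (g' x) x)
    (hg' : ∀ x ∈ Icc c (c + h), HasDerivAt g' (g'' x) x)
    (hg'' : IntervalIntegrable g'' volume c (c + h)) :
    ∫ x in c..c + h, trapezoidKernel c h x * g'' x
      = h / 2 * (g c + g (c + h)) - ∫ x in c..c + h, g x := by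
  rw [← uIcc_of_le (by linarith : c ≤ c + h)] at hg hg'
  rw [intervalIntegral.integral_mul_deriv_eq_deriv_mul
      (fun x _ => hasDerivAt_trapezoidKernel c h x) hg'
      (Continuous.intervalIntegrable (by fun_prop) _ _) hg'',
    intervalIntegral.integral_mul_deriv_eq_deriv_mul
      (fun x _ => (hasDerivAt_id' x).const_sub (c + h / 2)) hg
      intervalIntegrable_const
      (ContinuousOn.intervalIntegrable fun x hx => (hg' x hx).continuousAt.continuousWithinAt)]
  simp only [trapezoidKernel, neg_one_mul, intervalIntegral.integral_neg]
  ring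

lemma abs_trapezoid_cell_error_le (hh : 0 ≤ h)
    (hg : ∀ x ∈ Icc c (c + h), HasDerivAt g (g' x) x)
    (hg' : ∀ x ∈ Icc c (c + h), HasDerivAt g' (g'' x) x)
    (hg'' : ∀ x ∈ Icc c (c + h), HasDerivAt g'' (g''' x) x)
    (hK : ∀ x ∈ Icc c (c + h), |g''' x| ≤ K) :
    |(∫ x in c..c + h, g x) - h / 2 * (g c + g (c + h)) + h ^ 2 / 12 * (g' (c + h) - g' c)|
      ≤ K * h ^ 4 / 12 := by
  set Q : ℝ → ℝ := fun x => h ^ 2 / 12 - trapezoidKernel c h x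
  have hcc : uIcc c (c + h) = Icc c (c + h) := uIcc_of_le (by linarith)
  have hP : Continuous (trapezoidKernel c h) := by unfold trapezoidKernel; fun_prop
  have hg''int : IntervalIntegrable g'' volume c (c + h) :=
    ContinuousOn.intervalIntegrable fun x hx =>
      (hg'' x (hcc ▸ hx)).continuousAt.continuousWithinAt
  have hPg'' : IntervalIntegrable (fun x => trapezoidKernel c h x * g'' x) volume c (c + h) :=
    hg''int.continuousOn_mul hP.continuousOn
  -- `Q` has mean zero, so `g''` may be replaced by its oscillation `g'' - g'' c`.
  have herror : (∫ x in c..c + h, g x) - h / 2 * (g c + g (c + h))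
      + h ^ 2 / 12 * (g' (c + h) - g' c)
      = ∫ x in c..c + h, Q x * (g'' x - g'' c) := by
    have hsplit : ∀ x, Q x * (g'' x - g'' c) = h ^ 2 / 12 * g'' x
        - trapezoidKernel c h x * g'' x - g'' c * Q x := fun x => by ring
    simp only [hsplit]
    rw [intervalIntegral.integral_sub ((hg''int.const_mul _).sub hPg'')
        ((intervalIntegrable_const.sub (hP.intervalIntegrable _ _)).const_mul _),
      intervalIntegral.integral_sub (hg''int.const_mul _) hPg'',
      intervalIntegral.integral_const_mul, intervalIntegral.integral_const_mul,
      intervalIntegral.integral_eq_sub_of_hasDerivAt (fun x hx => hg' x (hcc ▸ hx)) hg''int,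
      integral_trapezoidKernel_mul hh hg hg' hg''int,
      intervalIntegral.integral_sub intervalIntegrable_const (hP.intervalIntegrable _ _),
      integral_trapezoidKernel, intervalIntegral.integral_const, smul_eq_mul]
    ring
  have hosc : ∀ x ∈ Icc c (c + h), |g'' x - g'' c| ≤ K * h := by
    intro x hx
    have := (convex_Icc c (c + h)).norm_image_sub_le_of_norm_hasDerivWithin_le
      (fun y hy => (hg'' y hy).hasDerivWithinAt) hK (left_mem_Icc.2 (by linarith)) hx
    rw [Real.norm_eq_abs, Real.norm_eq_abs, abs_of_nonneg (sub_nonneg.2 hx.1)] at this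
    nlinarith [hx.2, (abs_nonneg _).trans (hK c (left_mem_Icc.2 (by linarith)))]
  have hbound : ∀ x ∈ uIoc c (c + h), ‖Q x * (g'' x - g'' c)‖ ≤ h ^ 2 / 12 * (K * h) := by
    intro x hx
    rw [uIoc_of_le (by linarith)] at hx
    have hx' : x ∈ Icc c (c + h) := Set.Ioc_subset_Icc_self hx
    rw [Real.norm_eq_abs, abs_mul]
    exact mul_le_mul (abs_sub_trapezoidKernel_le hx') (hosc x hx') (abs_nonneg _)
      (by positivity)
  rw [herror]
  calc _ ≤ h ^ 2 / 12 * (K * h) * |c + h - c| :=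
        intervalIntegral.norm_integral_le_of_norm_le_const hbound
    _ = K * h ^ 4 / 12 := by rw [add_sub_cancel_left, abs_of_nonneg hh]; ring

end Cell

lemma Finset.sum_range_add_succ {M : Type*} [AddCommMonoid M] (x : ℕ → M) {n : ℕ} (hn : 0 < n) :
    ∑ k ∈ range n, (x k + x (k + 1)) = x 0 + 2 • ∑ k ∈ Ico 1 n, x k + x n := by
  induction n, hn using Nat.le_induction with
  | base => simp
  | succ n hn ih =>
    rw [sum_range_succ, ih, sum_Ico_succ_top hn, smul_add, two_nsmul (x n)]
    abel

section Composite

variable {g g' g'' g''' : ℝ → ℝ} {L K : ℝ} {n : ℕ}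

theorem abs_integral_sub_trapezoid_le (hL : 0 ≤ L) (hn : 0 < n)
    (hg : ∀ x ∈ Icc 0 L, HasDerivAt g (g' x) x)
    (hg' : ∀ x ∈ Icc 0 L, HasDerivAt g' (g'' x) x)
    (hg'' : ∀ x ∈ Icc 0 L, HasDerivAt g'' (g''' x) x)
    (hK : ∀ x ∈ Icc 0 L, |g''' x| ≤ K)
    (hg0 : g 0 = 0) (hgL : g L = 0) (hg'0 : g' 0 = 0) (hg'L : g' L = 0) :
    |(∫ x in 0..L, g x) - L / n * ∑ k ∈ Ico 1 n, g (k * (L / n))| ≤ K * L * (L / n) ^ 3 / 12 := by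
  set h := L / n
  set node : ℕ → ℝ := fun k => k * h
  have hh : 0 ≤ h := by positivity
  have hnh : node n = L := by simp only [node, h]; field_simp
  have hnode : ∀ k, node (k + 1) = node k + h := fun k => by simp only [node]; push_cast; ring
  have hcell : ∀ k < n, Icc (node k) (node k + h) ⊆ Icc 0 L := by
    intro k hk
    rw [← hnode, ← hnh]
    exact Icc_subset_Icc (by positivity) (by simp only [node]; gcongr; exact_mod_cast hk)
  -- Summing the corrected cell errors, the end corrections telescope to `g' L - g' 0 = 0`.
  have hsum : (∫ x in 0..L, g x) - h * ∑ k ∈ Ico 1 n, g (node k)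
      = ∑ k ∈ range n, ((∫ x in node k..node k + h, g x) - h / 2 * (g (node k) + g (node k + h))
          + h ^ 2 / 12 * (g' (node k + h) - g' (node k))) := by
    have hint : ∀ k < n, IntervalIntegrable g volume (node k) (node (k + 1)) := by
      intro k hk
      refine ContinuousOn.intervalIntegrable fun x hx => ?_
      rw [Set.uIcc_of_le (by rw [hnode]; linarith), hnode] at hx
      exact (hg x (hcell k hk hx)).continuousAt.continuousWithinAt
    simp only [← hnode, sum_add_distrib, sum_sub_distrib, ← mul_sum,
      intervalIntegral.sum_integral_adjacent_intervals hint, sum_range_add_succ _ hn,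
      sum_range_sub (fun k => g' (node k))]
    simp [node, hnh, hg0, hgL, hg'0, hg'L]
    ring
  rw [hsum]
  calc _ ≤ ∑ k ∈ range n, K * h ^ 4 / 12 := by
        refine (abs_sum_le_sum_abs _ _).trans (sum_le_sum fun k hk => ?_)
        have hk := hcell k (mem_range.1 hk)
        exact abs_trapezoid_cell_error_le hh (fun x hx => hg x (hk hx))
          (fun x hx => hg' x (hk hx)) (fun x hx => hg'' x (hk hx)) (fun x hx => hK x (hk hx))
    _ = K * L * h ^ 3 / 12 := by
        rw [sum_const, card_range, nsmul_eq_mul, ← hnh]; simp only [node]; ring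

end Composite

section Slices

noncomputable def partialFst (f : ℝ × ℝ → ℝ) (p : ℝ × ℝ) : ℝ := fderiv ℝ f p (1, 0)

variable {f : ℝ × ℝ → ℝ} {U : Set (ℝ × ℝ)}

lemma DifferentiableAt.hasDerivAt_partialFst {x y : ℝ} (hf : DifferentiableAt ℝ f (x, y)) :
    HasDerivAt (fun t => f (t, y)) (partialFst f (x, y)) x :=
  hf.hasFDerivAt.comp_hasDerivAt x ((hasDerivAt_id x).prodMk (hasDerivAt_const x y))

lemma ContDiffOn.partialFst {n : WithTop ℕ∞} (hf : ContDiffOn ℝ (n + 1) f U) (hU : IsOpen U) :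
    ContDiffOn ℝ n (partialFst f) U :=
  (hf.fderiv_of_isOpen hU le_rfl).clm_apply contDiffOn_const

lemma partialFst_sq_eq_zero {p : ℝ × ℝ} (hf : DifferentiableAt ℝ f p) (hfp : f p = 0) :
    partialFst (fun q => f q ^ 2) p = 0 := by
  simp [partialFst, (hf.hasFDerivAt.pow 2).fderiv, hfp]

theorem exists_forall_abs_integral_slice_sub_trapezoid_le {a b : ℝ} (ha : 0 ≤ a) (hU : IsOpen U)
    (hRU : Icc 0 a ×ˢ Icc 0 b ⊆ U) (hf : ContDiffOn ℝ 3 f U)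
    (hbd : ∀ x ∈ ({0, a} : Set ℝ), ∀ y ∈ Icc 0 b, f (x, y) = 0 ∧ partialFst f (x, y) = 0) :
    ∃ K, 0 ≤ K ∧ ∀ n : ℕ, 0 < n → ∀ y ∈ Icc 0 b,
      |(∫ x in 0..a, f (x, y)) - a / n * ∑ k ∈ Ico 1 n, f (k * (a / n), y)| ≤ K * (a / n) ^ 3 := by
  have hf₁ : ContDiffOn ℝ 2 (partialFst f) U := hf.partialFst hU
  have hf₂ : ContDiffOn ℝ 1 (partialFst (partialFst f)) U := hf₁.partialFst hU
  have hf₃ : ContinuousOn (partialFst (partialFst (partialFst f))) U :=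
    (hf₂.partialFst (n := 0) hU).continuousOn
  obtain ⟨C, hC⟩ := (isCompact_Icc.prod isCompact_Icc).exists_bound_of_continuousOn
    (hf₃.mono hRU)
  refine ⟨max C 0 * a / 12, by positivity, fun n hn y hy => ?_⟩
  have hslice : ∀ {φ : ℝ × ℝ → ℝ}, ContDiffOn ℝ 1 φ U → ∀ x ∈ Icc 0 a,
      HasDerivAt (fun t => φ (t, y)) (partialFst φ (x, y)) x := fun hφ x hx =>
    ((hφ.differentiableOn one_ne_zero).differentiableAt
      (hU.mem_nhds (hRU ⟨hx, hy⟩))).hasDerivAt_partialFst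
  have := abs_integral_sub_trapezoid_le ha hn (hslice (hf.of_le (by norm_num)))
    (hslice (hf₁.of_le (by norm_num))) (hslice hf₂)
    (fun x hx => (hC (x, y) ⟨hx, hy⟩).trans (le_max_left C 0))
    (hbd 0 (by simp) y hy).1 (hbd a (by simp) y hy).1
    (hbd 0 (by simp) y hy).2 (hbd a (by simp) y hy).2
  exact this.trans_eq (by ring)

end Slices

theorem exists_forall_abs_integral_sq_slice_sub_trapezoid_le {u : ℝ × ℝ → ℝ}
    {U : Set (ℝ × ℝ)} {a b : ℝ} (ha : 0 ≤ a) (hU : IsOpen U) (hRU : Icc 0 a ×ˢ Icc 0 b ⊆ U)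
    (hu : ContDiffOn ℝ 3 u U) (hbd : ∀ p ∈ frontier (Icc 0 a ×ˢ Icc 0 b), u p = 0) :
    ∃ K, 0 ≤ K ∧ ∀ n : ℕ, 0 < n → ∀ y ∈ Icc 0 b,
      |(∫ x in 0..a, u (x, y) ^ 2) - a / n * ∑ k ∈ Ico 1 n, u (k * (a / n), y) ^ 2|
        ≤ K * (a / n) ^ 3 := by
  refine exists_forall_abs_integral_slice_sub_trapezoid_le ha hU hRU (hu.pow 2)
    fun x hx y hy => ?_
  have hxy : (x, y) ∈ Icc 0 a ×ˢ Icc 0 b := by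
    refine ⟨?_, hy⟩
    rcases hx with rfl | rfl <;> simp [ha]
  have hu0 : u (x, y) = 0 := hbd _ <| by
    rw [frontier_prod_eq, closure_Icc, closure_Icc, frontier_Icc ha]
    exact Or.inr ⟨hx, hy⟩
  refine ⟨by simp [hu0], partialFst_sq_eq_zero ?_ hu0⟩
  exact (hu.differentiableOn (by norm_num)).differentiableAt (hU.mem_nhds (hRU hxy))

section Fubini

variable {f : ℝ × ℝ → ℝ} {a₀ a₁ b₀ b₁ : ℝ}

lemma setIntegral_Icc_prod_Icc_eq_intervalIntegral (ha : a₀ ≤ a₁) (hb : b₀ ≤ b₁)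
    (hf : IntegrableOn f (Icc a₀ a₁ ×ˢ Icc b₀ b₁)) :
    ∫ p in Icc a₀ a₁ ×ˢ Icc b₀ b₁, f p = ∫ x in a₀..a₁, ∫ y in b₀..b₁, f (x, y) := by
  rw [Measure.volume_eq_prod] at hf ⊢
  rw [setIntegral_prod f hf, intervalIntegral.integral_of_le ha, ← integral_Icc_eq_integral_Ioc]
  simp only [intervalIntegral.integral_of_le hb, integral_Icc_eq_integral_Ioc]

lemma MeasureTheory.IntegrableOn.intervalIntegrable_intervalIntegral_prod (ha : a₀ ≤ a₁)
    (hb : b₀ ≤ b₁) (hf : IntegrableOn f (Icc a₀ a₁ ×ˢ Icc b₀ b₁)) :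
    IntervalIntegrable (fun x => ∫ y in b₀..b₁, f (x, y)) volume a₀ a₁ := by
  rw [intervalIntegrable_iff_integrableOn_Icc_of_le ha]
  rw [IntegrableOn, Measure.volume_eq_prod, ← Measure.prod_restrict] at hf
  simp only [intervalIntegral.integral_of_le hb, ← integral_Icc_eq_integral_Ioc]
  exact hf.integral_prod_left

end Fubini

theorem abs_setIntegral_Icc_prod_Icc_sub_trapezoid_le {f : ℝ × ℝ → ℝ} {a b h εx εy : ℝ}
    {N M : ℕ} (ha : 0 ≤ a) (hh : 0 ≤ h) (hMh : M * h = b)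
    (hf : ContinuousOn f (Icc 0 a ×ˢ Icc 0 b))
    (hx : ∀ y ∈ Icc 0 b, |(∫ x in 0..a, f (x, y)) - h * ∑ i ∈ Ico 1 N, f (i * h, y)| ≤ εx)
    (hy : ∀ x ∈ Icc 0 a, |(∫ y in 0..b, f (x, y)) - h * ∑ j ∈ Ico 1 M, f (x, j * h)| ≤ εy) :
    |(∫ p in Icc 0 a ×ˢ Icc 0 b, f p) - h ^ 2 * ∑ i ∈ Ico 1 N, ∑ j ∈ Ico 1 M, f (i * h, j * h)|
      ≤ a * εy + b * εx := by
  have hb : 0 ≤ b := hMh ▸ by positivity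
  have hεx : 0 ≤ εx := (abs_nonneg _).trans (hx 0 (left_mem_Icc.2 hb))
  have hnode : ∀ j ∈ Finset.Ico 1 M, (j : ℝ) * h ∈ Icc 0 b := fun j hj => ⟨by positivity, by
    rw [← hMh]; gcongr; exact_mod_cast (Finset.mem_Ico.1 hj).2.le⟩
  have hrow : ∀ j ∈ Finset.Ico 1 M, IntervalIntegrable (fun x => f (x, j * h)) volume 0 a :=
    fun j hj => ContinuousOn.intervalIntegrable <| hf.comp (by fun_prop) fun x hx =>
      ⟨by rwa [uIcc_of_le ha] at hx, hnode j hj⟩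
  set S : ℝ → ℝ := fun x => h * ∑ j ∈ Ico 1 M, f (x, j * h)
  have hS : IntervalIntegrable S volume 0 a := by
    simpa only [Finset.sum_apply] using (IntervalIntegrable.sum (Ico 1 M) hrow).const_mul h
  have hR : IntegrableOn f (Icc 0 a ×ˢ Icc 0 b) :=
    hf.integrableOn_compact (isCompact_Icc.prod isCompact_Icc)
  have hsplit : (∫ p in Icc 0 a ×ˢ Icc 0 b, f p)
      - h ^ 2 * ∑ i ∈ Ico 1 N, ∑ j ∈ Ico 1 M, f (i * h, j * h)
      = (∫ x in 0..a, ((∫ y in 0..b, f (x, y)) - S x))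
        + h * ∑ j ∈ Ico 1 M,
          ((∫ x in 0..a, f (x, j * h)) - h * ∑ i ∈ Ico 1 N, f (i * h, j * h)) := by
    rw [setIntegral_Icc_prod_Icc_eq_intervalIntegral ha hb hR, intervalIntegral.integral_sub
      (hR.intervalIntegrable_intervalIntegral_prod ha hb) hS, intervalIntegral.integral_const_mul,
      intervalIntegral.integral_finsetSum hrow, sum_comm, sum_sub_distrib, mul_sub, mul_sum,
      mul_sum, mul_sum]
    simp only [← mul_assoc, ← sq]
    ring
  rw [hsplit]
  refine (abs_add_le _ _).trans (add_le_add ?_ ?_)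
  · rw [← Real.norm_eq_abs]
    calc _ ≤ εy * |a - 0| := intervalIntegral.norm_integral_le_of_norm_le_const fun x hx =>
          hy x (Set.Ioc_subset_Icc_self (by rwa [uIoc_of_le ha] at hx))
      _ = a * εy := by rw [sub_zero, abs_of_nonneg ha, mul_comm]
  · calc _ ≤ h * ∑ _j ∈ Ico 1 M, εx := by
          rw [abs_mul, abs_of_nonneg hh]
          exact mul_le_mul_of_nonneg_left ((abs_sum_le_sum_abs _ _).trans
            (sum_le_sum fun j hj => hx _ (hnode j hj))) hh
      _ ≤ b * εx := by
          rw [sum_const, Nat.card_Ico, nsmul_eq_mul, ← hMh, ← mul_assoc, mul_comm h]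
          gcongr
          exact_mod_cast Nat.sub_le M 1

lemma Prod.swap_mem_frontier_prod {X Y : Type*} [TopologicalSpace X] [TopologicalSpace Y]
    {s : Set X} {t : Set Y} {p : Y × X} (hp : p ∈ frontier (t ×ˢ s)) :
    p.swap ∈ frontier (s ×ˢ t) := by
  simp only [frontier_prod_eq, mem_union, mem_prod, Prod.fst_swap, Prod.snd_swap] at hp ⊢
  tauto

/-- Third-order accuracy of the composite two-dimensional trapezoidal rule for
`∫_R u²` when `u` vanishes on the boundary of the rectangle `R = [0,a] × [0,b]`. -/
theorem composite_trapezoid_third_order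
    (a b : ℝ) (ha : 0 < a) (hb : 0 < b)
    (u : ℝ × ℝ → ℝ) (U : Set (ℝ × ℝ)) (hU : IsOpen U)
    (hRU : Icc (0:ℝ) a ×ˢ Icc (0:ℝ) b ⊆ U) (hu : ContDiffOn ℝ 4 u U)
    (hbd : ∀ p ∈ frontier (Icc (0:ℝ) a ×ˢ Icc (0:ℝ) b), u p = 0) :
    ∃ C : ℝ, 0 < C ∧
      ∀ N M : ℕ, 0 < N → 0 < M → b / (a / N) = M →
        |(∫ p in Icc (0:ℝ) a ×ˢ Icc (0:ℝ) b, (u p) ^ 2)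
            - (a / N) ^ 2 * ∑ i ∈ Finset.Ico 1 N, ∑ j ∈ Finset.Ico 1 M,
                (u ((i : ℝ) * (a / N), (j : ℝ) * (a / N))) ^ 2|
          ≤ C * (a / N) ^ 3 := by
  obtain ⟨Kx, hKx, hx⟩ := exists_forall_abs_integral_sq_slice_sub_trapezoid_le ha.le hU hRU
    (hu.of_le (by norm_num)) hbd
  obtain ⟨Ky, hKy, hy⟩ := exists_forall_abs_integral_sq_slice_sub_trapezoid_le hb.le
    (hU.preimage continuous_swap) (fun p hp => hRU ⟨hp.2, hp.1⟩)
    ((hu.comp (contDiff_snd.prodMk contDiff_fst).contDiffOn fun p hp => hp).of_le (by norm_num))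
    fun p hp => hbd p.swap (Prod.swap_mem_frontier_prod hp)
  refine ⟨a * Ky + b * Kx + 1, by positivity, fun N M hN hM hNM => ?_⟩
  set h := a / N
  have hh : 0 < h := by positivity
  have hMh : (M : ℝ) * h = b := by rw [← hNM]; field_simp
  have hstep : b / M = h := by rw [← hMh]; field_simp
  calc _ ≤ a * (Ky * h ^ 3) + b * (Kx * h ^ 3) :=
        abs_setIntegral_Icc_prod_Icc_sub_trapezoid_le ha.le hh.le hMh
          ((hu.continuousOn.mono hRU).pow 2) (hx N hN)
          (fun x hx => hstep ▸ hy M hM x hx)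
    _ ≤ (a * Ky + b * Kx + 1) * h ^ 3 := by nlinarith [pow_pos hh 3]
end

section
/- Let g : ℝ → ℝ be three times continuously differentiable, let κ ∈ ℝ, and suppose g(0) = 0 and g''(0) = -κ·g'(0). Let s ≠ 0 with 1 - κs/2 ≠ 0, and let M be an upper bound for |g'''| on the closed interval with endpoints 0 and s. Then |g'(0) - g(s)/(s·(1 - κs/2))| ≤ M·s²/(6·|1 - κs/2|) and |g''(0) + κ·g(s)/(s·(1 - κs/2))| ≤ |κ|·M·s²/(6·|1 - κs/2|). -/
/-!
Second-order Taylor expansion at `0` with Lagrange remainder, together with `g 0 = 0` and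
`g'' 0 = -κ g' 0`, gives `g s = g' 0 · s (1 - κ s / 2) + R` with `|R| ≤ M |s|³ / 6`. Dividing by
`s (1 - κ s / 2)` yields the first estimate, and multiplying it by `-κ` yields the second.
-/

open Set

open Finset Nat in
theorem taylorWithinEval_uIcc_eq_sum {f : ℝ → ℝ} {n : ℕ} (hf : ContDiff ℝ n f) {x₀ x : ℝ}
    (hx : x₀ ≠ x) :
    taylorWithinEval f n (uIcc x₀ x) x₀ x =
      ∑ k ∈ range (n + 1), iteratedDeriv k f x₀ * (x - x₀) ^ k / k ! := by
  rw [taylor_within_apply]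
  refine sum_congr rfl fun k hk => ?_
  have hkn : (k : WithTop ℕ∞) ≤ n := by exact_mod_cast Nat.lt_succ_iff.mp (mem_range.mp hk)
  rw [iteratedDerivWithin_eq_iteratedDeriv (uniqueDiffOn_uIcc hx)
    ((hf.of_le hkn).contDiffAt) left_mem_uIcc, smul_eq_mul]
  ring

open Finset Nat in
theorem abs_sub_taylor_sum_le {f : ℝ → ℝ} {n : ℕ} (hf : ContDiff ℝ (n + 1) f) {x₀ x M : ℝ}
    (hx : x₀ ≠ x) (hM : ∀ y ∈ uIcc x₀ x, |iteratedDeriv (n + 1) f y| ≤ M) :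
    |f x - ∑ k ∈ range (n + 1), iteratedDeriv k f x₀ * (x - x₀) ^ k / k !|
      ≤ M * |x - x₀| ^ (n + 1) / (n + 1)! := by
  obtain ⟨y, hy, hremainder⟩ := taylor_mean_remainder_lagrange_iteratedDeriv hx hf.contDiffOn
  rw [← taylorWithinEval_uIcc_eq_sum (hf.of_le (by norm_cast; omega)) hx, hremainder,
    abs_div, abs_mul, abs_pow, abs_of_pos (by positivity : (0 : ℝ) < (n + 1)!)]
  gcongr
  exact hM y (Ioo_subset_Icc_self hy)

theorem abs_sub_taylor_two_le {f : ℝ → ℝ} (hf : ContDiff ℝ 3 f) {x₀ x M : ℝ} (hx : x₀ ≠ x)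
    (hM : ∀ y ∈ uIcc x₀ x, |deriv (deriv (deriv f)) y| ≤ M) :
    |f x - (f x₀ + deriv f x₀ * (x - x₀) + deriv (deriv f) x₀ * (x - x₀) ^ 2 / 2)|
      ≤ M * |x - x₀| ^ 3 / 6 := by
  simpa [Finset.sum_range_succ, iteratedDeriv_eq_iterate, Nat.factorial] using
    abs_sub_taylor_sum_le (n := 2) hf hx (by simpa [iteratedDeriv_eq_iterate] using hM)

theorem abs_sub_div_le_of_abs_sub_mul_le {a b d e : ℝ} (hd : d ≠ 0) (h : |b - a * d| ≤ e) :
    |a - b / d| ≤ e / |d| := by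
  rwa [show a - b / d = -(b - a * d) / d by field_simp; ring, abs_div, abs_neg,
    div_le_div_iff_of_pos_right (abs_pos.mpr hd)]

/-- One-dimensional form of the extrapolation formulas for the first and second
normal derivatives at the boundary: if `g(0) = 0` and `g''(0) = -κ·g'(0)`, then
`g'(0) ≈ g(s)/(s(1 - κs/2))` and `g''(0) ≈ -κ·g(s)/(s(1 - κs/2))` with errors
controlled by the third derivative. -/
theorem normal_derivative_extrapolation
    (g : ℝ → ℝ) (hg : ContDiff ℝ 3 g) (κ : ℝ)
    (h0 : g 0 = 0) (h2 : deriv (deriv g) 0 = -κ * deriv g 0)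
    (s : ℝ) (hs : s ≠ 0) (hκs : 1 - κ * s / 2 ≠ 0)
    (M : ℝ) (hM : ∀ x ∈ uIcc 0 s, |deriv (deriv (deriv g)) x| ≤ M) :
    |deriv g 0 - g s / (s * (1 - κ * s / 2))| ≤ M * s ^ 2 / (6 * |1 - κ * s / 2|) ∧
    |deriv (deriv g) 0 + κ * (g s / (s * (1 - κ * s / 2)))|
      ≤ |κ| * M * s ^ 2 / (6 * |1 - κ * s / 2|) := by
  have htaylor : |g s - deriv g 0 * (s * (1 - κ * s / 2))| ≤ M * |s| ^ 3 / 6 := by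
    convert abs_sub_taylor_two_le hg hs.symm hM using 2 <;> simp only [h0, h2, sub_zero]
    ring
  have hfirst : |deriv g 0 - g s / (s * (1 - κ * s / 2))| ≤ M * s ^ 2 / (6 * |1 - κ * s / 2|) :=
    calc _ ≤ M * |s| ^ 3 / 6 / |s * (1 - κ * s / 2)| :=
          abs_sub_div_le_of_abs_sub_mul_le (mul_ne_zero hs hκs) htaylor
      _ = _ := by rw [abs_mul, pow_succ, sq_abs]; field_simp
  refine ⟨hfirst, ?_⟩
  calc |deriv (deriv g) 0 + κ * (g s / (s * (1 - κ * s / 2)))|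
      = |κ| * |deriv g 0 - g s / (s * (1 - κ * s / 2))| := by
        rw [h2, ← abs_neg κ, ← abs_mul]; congr 1; ring
    _ ≤ |κ| * (M * s ^ 2 / (6 * |1 - κ * s / 2|)) := by gcongr
    _ = |κ| * M * s ^ 2 / (6 * |1 - κ * s / 2|) := by ring
end
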